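/- arXiv:1602.04922 — 4 statements merged into one kernel-verified Lean document; each statement's English description precedes it below -/
import Mathlib

section
/- The sum over all k of the exterior angles of the convex polygon equals 2π; that is, Σ_{k=0}^{n−1} angle(v_{k+1} − v_k, v_k − v_{k−1}) = 2π, where angle denotes the unsigned angle between the two vectors. -/
noncomputable section

namespace BNC

/-- The Euclidean plane. -/
abbrev Pt : Type := EuclideanSpace ℝ (Fin 2)

/-- Planar cross product (determinant) of two vectors. -/
def cross (u w : Pt) : ℝ := u 0 * w 1 - u 1 * w 0

/-- `v` lists points in strictly convex position in counterclockwise order: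
every point distinct from `v i` and `v (i+1)` lies strictly to the left of the
directed line from `v i` to `v (i+1)`.  (This also forces no three of the
points to be collinear.) -/
def ConvexCCW {n : ℕ} (v : ZMod n → Pt) : Prop :=
  ∀ i j : ZMod n, j ≠ i → j ≠ i + 1 → 0 < cross (v (i + 1) - v i) (v j - v i)

/-- The cyclic arc of indices `i, i+1, …, j` (mod `n`). -/
def arc {n : ℕ} (i j : ZMod n) : Finset (ZMod n) :=
  Finset.image (fun t : ℕ => i + (t : ZMod n)) (Finset.range ((j - i).val + 1))

/-- The turning angle `τ(i,j)`: the sum over `k ∈ ⟨i+1..j−1⟩` of the unsigned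
angle between `v (k+1) − v k` and `v k − v (k−1)`. -/
def tau {n : ℕ} (v : ZMod n → Pt) (i j : ZMod n) : ℝ :=
  ∑ k ∈ arc (i + 1) (j - 1),
    InnerProductGeometry.angle (v (k + 1) - v k) (v k - v (k - 1))

/-- The length of the segment joining the two points of an unordered pair. -/
def pairDist {n : ℕ} (v : ZMod n → Pt) : Sym2 (ZMod n) → ℝ :=
  Sym2.lift ⟨fun a b => dist (v a) (v b), fun a b => dist_comm (v a) (v b)⟩

/-- The closed segment joining the two points of an unordered pair. -/
def pairSeg {n : ℕ} (v : ZMod n → Pt) : Sym2 (ZMod n) → Set Pt :=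
  Sym2.lift ⟨fun a b => segment ℝ (v a) (v b), fun a b => segment_symm ℝ (v a) (v b)⟩

/-- `M` is a perfect matching of the index set `A`: a set of non-degenerate
unordered pairs of indices from `A` such that every index of `A` belongs to
exactly one pair. -/
def IsMatchingOn {n : ℕ} (A : Set (ZMod n)) (M : Set (Sym2 (ZMod n))) : Prop :=
  (∀ e ∈ M, ¬ e.IsDiag) ∧ (∀ e ∈ M, ∀ k, k ∈ e → k ∈ A) ∧
    (∀ k ∈ A, ∃! e, e ∈ M ∧ k ∈ e)

/-- The closed segments of distinct pairs of `M` are pairwise disjoint. -/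
def NonCrossing {n : ℕ} (v : ZMod n → Pt) (M : Set (Sym2 (ZMod n))) : Prop :=
  ∀ e ∈ M, ∀ e' ∈ M, e ≠ e' → Disjoint (pairSeg v e) (pairSeg v e')

/-- The bottleneck value of a matching: the maximal segment length. -/
def bnM {n : ℕ} (v : ZMod n → Pt) (M : Set (Sym2 (ZMod n))) : ℝ :=
  sSup (pairDist v '' M)

/-- A non-crossing perfect matching of the whole point set. -/
def IsNCMatching {n : ℕ} (v : ZMod n → Pt) (M : Set (Sym2 (ZMod n))) : Prop :=
  IsMatchingOn Set.univ M ∧ NonCrossing v M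

/-- A bottleneck matching: a non-crossing matching minimizing the bottleneck value. -/
def IsBottleneck {n : ℕ} (v : ZMod n → Pt) (M : Set (Sym2 (ZMod n))) : Prop :=
  IsNCMatching v M ∧ ∀ M', IsNCMatching v M' → bnM v M ≤ bnM v M'

/-- A pair is an edge of the full polygon iff it is of the form `{k, k+1}`. -/
def IsPolyEdge {n : ℕ} (e : Sym2 (ZMod n)) : Prop := ∃ k : ZMod n, e = s(k, k + 1)

/-- The diagonals of a matching of the full point set. -/
def fullDiags {n : ℕ} (M : Set (Sym2 (ZMod n))) : Set (Sym2 (ZMod n)) :=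
  {e ∈ M | ¬ IsPolyEdge e}

/-- The full polygon: the convex hull of all the points. -/
def fullPoly {n : ℕ} (v : ZMod n → Pt) : Set Pt := convexHull ℝ (Set.range v)

/-- The interior of the polygon `Poly` minus the union of the segments of the
diagonals from `D`. -/
def regionSpace {n : ℕ} (v : ZMod n → Pt) (Poly : Set Pt) (D : Set (Sym2 (ZMod n))) :
    Set Pt :=
  interior Poly \ ⋃ e ∈ D, pairSeg v e

/-- `R` is a region: the closure of a connected component of the interior of the
polygon minus the union of the diagonal segments. -/
def IsRegion {n : ℕ} (v : ZMod n → Pt) (Poly : Set Pt) (D : Set (Sym2 (ZMod n)))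
    (R : Set Pt) : Prop :=
  ∃ x ∈ regionSpace v Poly D, R = closure (connectedComponentIn (regionSpace v Poly D) x)

/-- The diagonals from `D` whose segment lies on the boundary of `R`. -/
def boundDiags {n : ℕ} (v : ZMod n → Pt) (Poly : Set Pt) (D : Set (Sym2 (ZMod n)))
    (R : Set Pt) : Set (Sym2 (ZMod n)) :=
  {e ∈ D | pairSeg v e ⊆ frontier R}

/-- `R` is a region bounded by exactly `k` diagonals. -/
def KBounded {n : ℕ} (v : ZMod n → Pt) (Poly : Set Pt) (D : Set (Sym2 (ZMod n)))
    (R : Set Pt) (k : ℕ) : Prop :=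
  IsRegion v Poly D R ∧ (boundDiags v Poly D R).ncard = k

/-- The graph whose vertices are the diagonals of `D`, two being adjacent iff
some 2-bounded region has both on its boundary. -/
def cascadeGraph {n : ℕ} (v : ZMod n → Pt) (Poly : Set Pt) (D : Set (Sym2 (ZMod n))) :
    SimpleGraph D where
  Adj a b := a ≠ b ∧ ∃ R : Set Pt, KBounded v Poly D R 2 ∧
      pairSeg v a.1 ⊆ frontier R ∧ pairSeg v b.1 ⊆ frontier R
  symm := by
    constructor
    rintro a b ⟨hab, R, h1, h2, h3⟩
    exact ⟨hab.symm, R, h1, h3, h2⟩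
  loopless := by constructor; rintro a ⟨h, -⟩; exact h rfl

/-- The number of cascades: the number of connected components of the cascade graph. -/
def cascadeCount {n : ℕ} (v : ZMod n → Pt) (Poly : Set Pt) (D : Set (Sym2 (ZMod n))) : ℕ :=
  Nat.card (cascadeGraph v Poly D).ConnectedComponent

/-- A pair is a diagonal relative to the arc `⟨i..j⟩` iff it is neither `{i,j}`
nor of the form `{k, k+1}` with both `k` and `k+1` in the arc. -/
def ArcDiag {n : ℕ} (i j : ZMod n) (e : Sym2 (ZMod n)) : Prop :=
  e ≠ s(i, j) ∧ ∀ k : ZMod n, k ∈ arc i j → k + 1 ∈ arc i j → e ≠ s(k, k + 1)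

/-- The convex hull of the points of the arc `⟨i..j⟩`. -/
def arcPoly {n : ℕ} (v : ZMod n → Pt) (i j : ZMod n) : Set Pt :=
  convexHull ℝ (v '' (arc i j : Set (ZMod n)))

/-- The diagonals (relative to the arc `⟨i..j⟩`) of a matching `M`. -/
def arcDiags {n : ℕ} (i j : ZMod n) (M : Set (Sym2 (ZMod n))) : Set (Sym2 (ZMod n)) :=
  {e ∈ M | ArcDiag i j e}

/-- `M` is admissible for the subproblem `Matching(i,j)`: it is a non-crossing
perfect matching of the points of the arc `⟨i..j⟩`, it has at most one cascade,
and any region whose boundary contains the segment `[v i, v j]` has at most one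
diagonal of `M` on its boundary. -/
def Admissible {n : ℕ} (v : ZMod n → Pt) (i j : ZMod n) (M : Set (Sym2 (ZMod n))) : Prop :=
  IsMatchingOn (↑(arc i j)) M ∧ NonCrossing v M ∧
    cascadeCount v (arcPoly v i j) (arcDiags i j M) ≤ 1 ∧
    ∀ R : Set Pt, IsRegion v (arcPoly v i j) (arcDiags i j M) R →
      segment ℝ (v i) (v j) ⊆ frontier R →
      (boundDiags v (arcPoly v i j) (arcDiags i j M) R).ncard ≤ 1

/-- `S i j`: the optimal value of the subproblem `Matching(i,j)`. -/
def S {n : ℕ} (v : ZMod n → Pt) (i j : ZMod n) : ℝ :=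
  sInf (bnM v '' {M | Admissible v i j M})

/-- The pair `(i,j)` is necessary: every admissible matching attaining `S i j`
contains the pair `{i,j}`. -/
def Necessary {n : ℕ} (v : ZMod n → Pt) (i j : ZMod n) : Prop :=
  ∀ M : Set (Sym2 (ZMod n)), Admissible v i j M → bnM v M = S v i j → s(i, j) ∈ M

/-- The closed right side of the directed line from `v i` to `v j`. -/
def rightClosed {n : ℕ} (v : ZMod n → Pt) (i j : ZMod n) : Set Pt :=
  {P : Pt | cross (v j - v i) (P - v i) ≤ 0}

/-- The region `Π⁺(i,j)`. -/
def PiPlus {n : ℕ} (v : ZMod n → Pt) (i j : ZMod n) : Set Pt :=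
  {P ∈ rightClosed v i j |
    Real.pi / 3 ≤ EuclideanGeometry.angle (v i) P (v j) ∧ dist (v i) (v j) ≤ dist P (v i)}

/-- The region `Π⁻(i,j)`. -/
def PiMinus {n : ℕ} (v : ZMod n → Pt) (i j : ZMod n) : Set Pt :=
  {P ∈ rightClosed v i j |
    Real.pi / 3 ≤ EuclideanGeometry.angle (v i) P (v j) ∧ dist (v i) (v j) ≤ dist P (v j)}

/-- `(i,j)` is a feasible pair: the arc `⟨i..j⟩` has an even number of points. -/
def Feasible {n : ℕ} (i j : ZMod n) : Prop := Even (arc i j).card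

/-- `(i,j)` is a diagonal pair (not an edge, not degenerate). -/
def IsDiagPair {n : ℕ} (i j : ZMod n) : Prop := i ≠ j ∧ j ≠ i + 1 ∧ i ≠ j + 1

/-- `(i,j)` is a candidate diagonal: a feasible diagonal that is necessary and
whose turning angle is at most `2π/3`. -/
def Candidate {n : ℕ} (v : ZMod n → Pt) (i j : ZMod n) : Prop :=
  Feasible i j ∧ IsDiagPair i j ∧ Necessary v i j ∧ tau v i j ≤ 2 * Real.pi / 3

end BNC

/-!
Identify the plane with `ℂ` and let `z k` be the direction of the edge from `v k` to `v (k + 1)`.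
The exterior angle at `v (k + 1)` is `arg (z (k + 1) / z k)`, and strict convexity puts this ratio
in the open upper half-plane, so each angle lies in `(0, π)`. Modulo `2π` the angles add up to the
argument of the product of the ratios, which telescopes to `1`; hence the sum is a positive multiple
of `2π`. It is below `4π` because the partial sums of the first `m < n` angles stay below `2π`:
at a first step where they reached `2π`, the direction `z 0` would lie in the closed cone between
`z m` and `z (m + 1)`, and convexity forbids a direction of the polygon to lie between two
consecutive ones.
-/

open Complex Finset InnerProductGeometry
open scoped Real

namespace Complex

lemma angle_eq_arg_div_of_im_pos {x y : ℂ} (h : 0 < (y / x).im) : angle x y = arg (y / x) := by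
  have hx : x ≠ 0 := by rintro rfl; simp at h
  have hy : y ≠ 0 := by rintro rfl; simp at h
  rw [angle_comm, angle_eq_abs_arg hy hx, abs_of_nonneg (arg_nonneg_iff.2 h.le)]

lemma arg_pos_of_im_pos {z : ℂ} (h : 0 < z.im) : 0 < arg z :=
  (arg_nonneg_iff.2 h.le).lt_of_ne fun h0 => h.ne' (arg_eq_zero_iff.1 h0.symm).2

lemma arg_lt_pi_of_im_pos {z : ℂ} (h : 0 < z.im) : arg z < π :=
  arg_lt_pi_iff.2 (Or.inr h.ne')

end Complex

lemma Real.eq_two_pi_of_coe_angle_eq_zero {x : ℝ} (h : (x : Real.Angle) = 0) (h0 : 0 < x)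
    (h4 : x < 4 * π) : x = 2 * π := by
  obtain ⟨k, rfl⟩ := Real.Angle.coe_eq_zero_iff.1 h
  rw [zsmul_eq_mul] at h0 h4 ⊢
  have hk0 : (0 : ℝ) < k := pos_of_mul_pos_left h0 Real.two_pi_pos.le
  have hk2 : (k : ℝ) < 2 := by nlinarith [Real.pi_pos]
  have hk : k = 1 := by
    have : 0 < k := by exact_mod_cast hk0
    have : k < 2 := by exact_mod_cast hk2
    omega
  simp [hk]

lemma ZMod.sum_eq_sum_range {M : Type*} [AddCommMonoid M] {n : ℕ} [NeZero n]
    (f : ZMod n → M) : ∑ k, f k = ∑ t ∈ range n, f t :=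
  Finset.sum_bij' (fun k _ => k.val) (fun t _ => (t : ZMod n))
    (fun k _ => mem_range.2 k.val_lt) (fun _ _ => mem_univ _)
    (fun k _ => ZMod.natCast_zmod_val k) (fun _ ht => ZMod.val_natCast_of_lt (mem_range.1 ht))
    (fun k _ => by rw [ZMod.natCast_zmod_val])

lemma ZMod.natCast_ne_zero_of_pos_of_lt {n m : ℕ} (h0 : 0 < m) (hn : m < n) :
    (m : ZMod n) ≠ 0 := by
  rw [Ne, ZMod.natCast_eq_zero_iff]
  exact fun h => (Nat.le_of_dvd h0 h).not_gt hn

section Turning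

variable {n : ℕ} (z : ZMod n → ℂ)

def turning (m : ℕ) : ℝ := ∑ t ∈ range m, arg (z (t + 1 : ℕ) / z t)

lemma turning_zero : turning z 0 = 0 := sum_range_zero _

lemma turning_succ (m : ℕ) :
    turning z (m + 1) = turning z m + arg (z (m + 1 : ℕ) / z m) :=
  sum_range_succ _ _

variable {z}

lemma coe_turning (hz : ∀ k, z k ≠ 0) (m : ℕ) :
    (turning z m : Real.Angle) = arg (z m / z 0) := by
  induction m with
  | zero => simp [turning_zero, div_self (hz 0)]
  | succ m ih =>
    rw [turning_succ, Real.Angle.coe_add, ih, ← arg_mul_coe_angle (div_ne_zero (hz _) (hz _))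
      (div_ne_zero (hz _) (hz _)), div_mul_div_cancel₀' (hz _)]

lemma im_div_eq_norm_mul_sin_turning (hz : ∀ k, z k ≠ 0) (m : ℕ) :
    (z m / z 0).im = ‖z m / z 0‖ * Real.sin (turning z m) := by
  rw [← norm_mul_sin_arg, ← Real.Angle.sin_coe, ← coe_turning hz, Real.Angle.sin_coe]

variable (hturn : ∀ k, 0 < (z (k + 1) / z k).im)
include hturn

lemma ne_zero_of_im_div_pos (k : ZMod n) : z k ≠ 0 := fun h => by
  simpa [h] using hturn k

lemma arg_div_succ_pos (m : ℕ) : 0 < arg (z (m + 1 : ℕ) / z m) :=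
  arg_pos_of_im_pos (by simpa using hturn m)

lemma arg_div_succ_lt_pi (m : ℕ) : arg (z (m + 1 : ℕ) / z m) < π :=
  arg_lt_pi_of_im_pos (by simpa using hturn m)

lemma turning_lt_two_pi
    (hcone : ∀ A B, B ≠ A → B ≠ A + 1 →
      0 ≤ (z B / z A).im → (z (A + 1) / z B).im < 0) :
    ∀ m < n, turning z m < 2 * π := by
  have hz := ne_zero_of_im_div_pos hturn
  intro m hm
  induction m with
  | zero => simpa [turning_zero] using Real.two_pi_pos
  | succ m ih =>
    have ih := ih (by omega)
    by_contra! h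
    have hθ := arg_div_succ_lt_pi hturn m
    rw [turning_succ] at h
    have hm0 : (m : ZMod n) ≠ 0 := by
      refine ZMod.natCast_ne_zero_of_pos_of_lt (Nat.pos_of_ne_zero ?_) (by omega)
      rintro rfl
      rw [turning_zero] at h
      linarith [Real.pi_pos]
    have hm1 : ((m + 1 : ℕ) : ZMod n) ≠ 0 :=
      ZMod.natCast_ne_zero_of_pos_of_lt m.succ_pos hm
    have hsin_m : Real.sin (turning z m) < 0 := by
      rw [← Real.sin_sub_two_pi]
      exact Real.sin_neg_of_neg_of_neg_pi_lt (by linarith) (by linarith)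
    have hsin_m1 : 0 ≤ Real.sin (turning z (m + 1)) := by
      rw [← Real.sin_sub_two_pi, turning_succ]
      exact Real.sin_nonneg_of_nonneg_of_le_pi (by linarith) (by linarith)
    have hleft : 0 ≤ (z 0 / z m).im := by
      rw [← inv_div, inv_im, im_div_eq_norm_mul_sin_turning hz]
      exact div_nonneg (neg_nonneg.2 (mul_nonpos_of_nonneg_of_nonpos (norm_nonneg (z m / z 0))
        hsin_m.le)) (normSq_nonneg _)
    have hright : 0 ≤ (z (m + 1 : ℕ) / z 0).im := by
      rw [im_div_eq_norm_mul_sin_turning hz]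
      exact mul_nonneg (norm_nonneg _) hsin_m1
    have := hcone m 0 hm0.symm (by rw [← Nat.cast_succ]; exact hm1.symm) hleft
    rw [← Nat.cast_succ] at this
    linarith

theorem sum_arg_div_eq_two_pi [NeZero n]
    (hcone : ∀ A B, B ≠ A → B ≠ A + 1 →
      0 ≤ (z B / z A).im → (z (A + 1) / z B).im < 0) :
    ∑ k, arg (z (k + 1) / z k) = 2 * π := by
  have hz := ne_zero_of_im_div_pos hturn
  have hsum : ∑ k, arg (z (k + 1) / z k) = turning z n := by
    simp only [ZMod.sum_eq_sum_range, turning, Nat.cast_succ]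
  have hcoe : (turning z n : Real.Angle) = 0 := by
    rw [coe_turning hz, ZMod.natCast_self, div_self (hz 0), arg_one, Real.Angle.coe_zero]
  have hpos : 0 < turning z n :=
    sum_pos (fun m _ => arg_div_succ_pos hturn m) (nonempty_range_iff.2 (NeZero.ne n))
  have hlt : turning z n < 4 * π := by
    obtain ⟨m, rfl⟩ := Nat.exists_eq_succ_of_ne_zero (NeZero.ne n)
    rw [turning_succ]
    linarith [turning_lt_two_pi hturn hcone m m.lt_succ_self, arg_div_succ_lt_pi hturn m,
      Real.pi_pos]
  rw [hsum, Real.eq_two_pi_of_coe_angle_eq_zero hcoe hpos hlt]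

end Turning

namespace BNC

def toComplex : Pt ≃ₗᵢ[ℝ] ℂ := Complex.orthonormalBasisOneI.repr.symm

lemma im_toComplex_div (u w : Pt) : (toComplex w / toComplex u).im = cross u w / ‖u‖ ^ 2 := by
  rw [← toComplex.norm_map u, ← normSq_eq_norm_sq, div_im]
  simp only [toComplex, orthonormalBasisOneI_repr_symm_apply, cross, add_re, add_im, mul_re,
    mul_im, ofReal_re, ofReal_im, I_re, I_im, mul_zero, mul_one, add_zero, zero_add, sub_self]
  ring

lemma cross_mul_cross_eq (a b c w : Pt) :
    cross a b * cross c w = cross c b * cross a w + cross a c * cross b w := by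
  simp only [cross]; ring

lemma cross_self (u : Pt) : cross u u = 0 := by
  simp only [cross]; ring

lemma cross_sub_comm (u a b : Pt) : cross u (a - b) = -cross u (b - a) := by
  simp only [cross, PiLp.sub_apply]; ring

lemma cross_sub_sub (a b c : Pt) : cross (b - a) (c - a) = cross (b - a) (c - b) := by
  simp only [cross, PiLp.sub_apply]; ring

def edge {n : ℕ} (v : ZMod n → Pt) (k : ZMod n) : Pt := v (k + 1) - v k

namespace ConvexCCW

variable {n : ℕ} {v : ZMod n → Pt}

lemma cross_edge_nonneg (hv : ConvexCCW v) (i j : ZMod n) : 0 ≤ cross (edge v i) (v j - v i) := by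
  by_cases hji : j = i
  · simp [hji, cross]
  by_cases hji1 : j = i + 1
  · rw [hji1]
    exact (cross_self _).ge
  exact (hv i j hji hji1).le

lemma cross_edge_pos (hv : ConvexCCW v) (hn : 3 ≤ n) (k : ZMod n) :
    0 < cross (edge v k) (edge v (k + 1)) := by
  have h1 : (1 : ZMod n) ≠ 0 := by
    exact_mod_cast ZMod.natCast_ne_zero_of_pos_of_lt (n := n) one_pos (by omega)
  have h2 : (2 : ZMod n) ≠ 0 := by
    exact_mod_cast ZMod.natCast_ne_zero_of_pos_of_lt (n := n) two_pos (by omega)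
  have h := hv k (k + 2) (fun h => h2 (by linear_combination h))
    (fun h => h1 (by linear_combination h))
  rwa [edge, edge, add_assoc, one_add_one_eq_two, ← cross_sub_sub]

lemma edge_ne_zero (hv : ConvexCCW v) (hn : 3 ≤ n) (k : ZMod n) : edge v k ≠ 0 := fun h => by
  simpa [h, cross] using hv.cross_edge_pos hn k

lemma cross_edge_neg (hv : ConvexCCW v) (hn : 3 ≤ n) {A B : ZMod n} (hBA : B ≠ A)
    (hBA1 : B ≠ A + 1) (h : 0 ≤ cross (edge v A) (edge v B)) :
    cross (edge v B) (edge v (A + 1)) < 0 := by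
  -- `w` lies left of `edge v A` and `edge v (A + 1)` but right of `edge v B`, so by Cramer's rule
  -- `edge v B` is not a nonnegative combination of `edge v A` and `edge v (A + 1)`.
  set w := v B - v (A + 1)
  have hAw : 0 < cross (edge v A) w := by
    rw [edge, ← cross_sub_sub]
    exact hv A B hBA hBA1
  have hA1w : 0 ≤ cross (edge v (A + 1)) w := hv.cross_edge_nonneg (A + 1) B
  have hBw : cross (edge v B) w < 0 := by
    have h := hv B (A + 1) (Ne.symm hBA1) (by simpa using Ne.symm hBA)
    rw [cross_sub_comm] at h
    exact neg_pos.1 h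
  by_contra! h'
  have hlhs := mul_neg_of_pos_of_neg (hv.cross_edge_pos hn A) hBw
  have hrhs := add_nonneg (mul_nonneg h' hAw.le) (mul_nonneg h hA1w)
  rw [← cross_mul_cross_eq] at hrhs
  exact hlhs.not_ge hrhs

lemma im_edge_div_pos (hv : ConvexCCW v) (hn : 3 ≤ n) (k : ZMod n) :
    0 < (toComplex (edge v (k + 1)) / toComplex (edge v k)).im := by
  rw [im_toComplex_div]
  exact div_pos (hv.cross_edge_pos hn k) (pow_pos (norm_pos_iff.2 (hv.edge_ne_zero hn k)) 2)

lemma im_edge_div_neg (hv : ConvexCCW v) (hn : 3 ≤ n) {A B : ZMod n} (hBA : B ≠ A)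
    (hBA1 : B ≠ A + 1) (h : 0 ≤ (toComplex (edge v B) / toComplex (edge v A)).im) :
    (toComplex (edge v (A + 1)) / toComplex (edge v B)).im < 0 := by
  rw [im_toComplex_div] at h ⊢
  have hA : 0 < ‖edge v A‖ ^ 2 := pow_pos (norm_pos_iff.2 (hv.edge_ne_zero hn A)) 2
  have hB : 0 < ‖edge v B‖ ^ 2 := pow_pos (norm_pos_iff.2 (hv.edge_ne_zero hn B)) 2
  have hAB : 0 ≤ cross (edge v A) (edge v B) := by simpa using (le_div_iff₀ hA).1 h
  exact div_neg_of_neg_of_pos (hv.cross_edge_neg hn hBA hBA1 hAB) hB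

end ConvexCCW

end BNC

/-- The sum of the exterior angles of a convex polygon equals `2π`. -/
theorem stmt2 (n : ℕ) [NeZero n] (hn : 3 ≤ n)
    (v : ZMod n → BNC.Pt) (hv : BNC.ConvexCCW v) :
    ∑ k : ZMod n, InnerProductGeometry.angle (v (k + 1) - v k) (v k - v (k - 1)) =
      2 * Real.pi := by
  set z : ZMod n → ℂ := fun k => BNC.toComplex (BNC.edge v k)
  have hturn : ∀ k, 0 < (z (k + 1) / z k).im := hv.im_edge_div_pos hn
  calc ∑ k : ZMod n, angle (v (k + 1) - v k) (v k - v (k - 1))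
      = ∑ k, angle (z k) (z (k + 1)) := by
        refine Fintype.sum_equiv (Equiv.subRight 1) _ _ fun k => ?_
        rw [angle_comm]
        simp only [Equiv.subRight_apply, sub_add_cancel, z, BNC.edge]
        exact (BNC.toComplex.toLinearIsometry.angle_map _ _).symm
    _ = ∑ k, arg (z (k + 1) / z k) :=
        sum_congr rfl fun k _ => angle_eq_arg_div_of_im_pos (hturn k)
    _ = 2 * π := sum_arg_div_eq_two_pi hturn fun _ _ => hv.im_edge_div_neg hn
end
end

section
/- No non-crossing matching of the points has exactly two cascades. -/
noncomputable section

/-!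
Cut along the diagonals, the polygon falls into convex cells, each determined by its sign
vector: the side of each diagonal's line on which it lies. A cell has the diagonal `e` on its
boundary exactly when its sign at every other diagonal `g` is the side of `g` on which `e` lies.

Suppose there are two cascades, and among pairs of diagonals in different cascades pick `E`, `F`
separated by the fewest diagonals. No diagonal `G` separates them: `G` lies in another cascade
than `E` or than `F`, and fewer diagonals separate it from that one. So the cell touching `E` on
the side of `F` has both on its boundary, and since `E`, `F` are not adjacent it has a third
boundary diagonal `Z`. A path in the cascade graph leaves its starting diagonal `X` on the side
away from every cell bounded by `X` and two further diagonals, and never crosses `X` again;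
hence `E`, `F` and `Z` lie in three different cascades.
-/

lemma Real.sign_mul_of_pos {t : ℝ} (ht : 0 < t) (c : ℝ) : Real.sign (t * c) = Real.sign c := by
  rcases lt_trichotomy c 0 with hc | rfl | hc
  · rw [Real.sign_of_neg (mul_neg_of_pos_of_neg ht hc), Real.sign_of_neg hc]
  · rw [mul_zero]
  · rw [Real.sign_of_pos (mul_pos ht hc), Real.sign_of_pos hc]

lemma Real.eq_sign_of_mul_nonneg {σ r : ℝ} (hσ : σ = -1 ∨ σ = 1) (hr : r ≠ 0) (h : 0 ≤ σ * r) :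
    σ = Real.sign r := by
  rcases hr.lt_or_gt with hr | hr
  · rw [Real.sign_of_neg hr]
    rcases hσ with rfl | rfl
    · rfl
    · linarith
  · rw [Real.sign_of_pos hr]
    rcases hσ with rfl | rfl
    · linarith
    · rfl

lemma IsPreconnected.sign_eq {X : Type*} [TopologicalSpace X] {s : Set X} (hs : IsPreconnected s)
    {f : X → ℝ} (hf : ContinuousOn f s) (h0 : ∀ z ∈ s, f z ≠ 0) {x y : X} (hx : x ∈ s)
    (hy : y ∈ s) : Real.sign (f x) = Real.sign (f y) := by
  rcases (h0 x hx).lt_or_gt with hx0 | hx0 <;> rcases (h0 y hy).lt_or_gt with hy0 | hy0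
  · rw [Real.sign_of_neg hx0, Real.sign_of_neg hy0]
  · obtain ⟨z, hz, hz0⟩ := hs.intermediate_value hx hy hf ⟨hx0.le, hy0.le⟩
    exact absurd hz0 (h0 z hz)
  · obtain ⟨z, hz, hz0⟩ := hs.intermediate_value hy hx hf ⟨hy0.le, hx0.le⟩
    exact absurd hz0 (h0 z hz)
  · rw [Real.sign_of_pos hx0, Real.sign_of_pos hy0]

lemma Nat.card_ne_two_of_pairwise_ne {α : Type*} {a b c : α} (hab : a ≠ b) (hac : a ≠ c)
    (hbc : b ≠ c) : Nat.card α ≠ 2 := by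
  intro h
  obtain ⟨x, y, -, hxy⟩ := Nat.card_eq_two_iff.1 h
  have hmem : ∀ z : α, z = x ∨ z = y := fun z => by
    simpa [← hxy] using Set.mem_univ z
  rcases hmem a with rfl | rfl <;> rcases hmem b with rfl | rfl <;> rcases hmem c with h | h <;>
    simp_all

namespace BNC

open Set

section Plane

lemma cross_apply (u w : Pt) : cross u w = u 0 * w 1 - u 1 * w 0 := rfl

def crossL (w : Pt) : Pt →ₗ[ℝ] ℝ where
  toFun := cross w
  map_add' x y := by simp only [cross_apply, PiLp.add_apply]; ring
  map_smul' c x := by simp only [cross_apply, PiLp.smul_apply, smul_eq_mul, RingHom.id_apply]; ring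

def orient (p q : Pt) : Pt →ᵃ[ℝ] ℝ where
  toFun x := cross (q - p) (x - p)
  linear := crossL (q - p)
  map_vadd' x u := by
    change cross (q - p) (u + x - p) = cross (q - p) u + cross (q - p) (x - p)
    rw [add_sub_assoc]
    exact (crossL (q - p)).map_add u (x - p)

lemma orient_apply (p q x : Pt) : orient p q x = cross (q - p) (x - p) := rfl

lemma orient_self_left (p q : Pt) : orient p q p = 0 := by
  simp [orient_apply, cross_apply]

lemma orient_self_right (p q : Pt) : orient p q q = 0 := by
  simp only [orient_apply, cross_apply]; ring

def rot (w : Pt) : Pt := !₂[-w 1, w 0]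

lemma cross_rot_pos {w : Pt} (hw : w ≠ 0) : 0 < cross w (rot w) := by
  have hw' : w 0 ≠ 0 ∨ w 1 ≠ 0 := by
    by_contra! h
    exact hw (by ext i; fin_cases i <;> simp [h.1, h.2])
  have : cross w (rot w) = w 0 ^ 2 + w 1 ^ 2 := by
    simp only [rot, cross_apply, Matrix.cons_val_one, Matrix.cons_val_fin_one,
      Matrix.cons_val_zero]
    ring
  rw [this]
  rcases hw' with h | h <;> positivity

lemma cross_smul_add_smul {u w : Pt} (h : cross u w ≠ 0) (z : Pt) :
    (cross z w / cross u w) • u + (cross u z / cross u w) • w = z := by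
  have key : cross z w • u + cross u z • w = cross u w • z := by
    ext i
    fin_cases i <;>
      simp only [cross_apply, Fin.zero_eta, Fin.mk_one, PiLp.add_apply, PiLp.smul_apply,
        smul_eq_mul] <;> ring
  rw [div_eq_inv_mul, div_eq_inv_mul, mul_smul, mul_smul, ← smul_add, key, smul_smul,
    inv_mul_cancel₀ h, one_smul]

lemma exists_eq_smul_of_cross_eq_zero {w z : Pt} (hw : w ≠ 0) (h : cross w z = 0) :
    ∃ t : ℝ, z = t • w := by
  refine ⟨cross z (rot w) / cross w (rot w), ?_⟩
  simpa [h] using (cross_smul_add_smul (cross_rot_pos hw).ne' z).symm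

lemma isOpenMap_smul_orient {p q : Pt} (hpq : p ≠ q) {c : ℝ} (hc : c ≠ 0) :
    IsOpenMap (c • orient p q) := by
  have hrot := (cross_rot_pos (sub_ne_zero.2 hpq.symm)).ne'
  refine AffineMap.isOpenMap_linear_iff.1 <|
    (c • orient p q).linear.isOpenMap_of_finiteDimensional fun r =>
      ⟨(r / (c * cross (q - p) (rot (q - p)))) • rot (q - p), ?_⟩
  rw [AffineMap.smul_linear, LinearMap.smul_apply, map_smul]
  change c * ((r / (c * cross (q - p) (rot (q - p)))) * cross (q - p) (rot (q - p))) = r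
  field_simp

lemma exists_lineMap_of_orient_eq_zero {p q x : Pt} (hpq : p ≠ q) (h : orient p q x = 0) :
    ∃ t : ℝ, x = AffineMap.lineMap p q t := by
  obtain ⟨t, ht⟩ := exists_eq_smul_of_cross_eq_zero (sub_ne_zero.2 hpq.symm) h
  exact ⟨t, by rw [AffineMap.lineMap_apply_module', ← ht, sub_add_cancel]⟩

end Plane

section Polygon

variable {n : ℕ} {v : ZMod n → Pt}

lemma natCast_ne_zero_of_lt {k : ℕ} (hk : 0 < k) (hkn : k < n) : (k : ZMod n) ≠ 0 := by
  rw [Ne, ZMod.natCast_eq_zero_iff]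
  exact Nat.not_dvd_of_pos_of_lt hk hkn

lemma self_ne_add_one (hn : 3 ≤ n) (j : ZMod n) : j ≠ j + 1 := by
  have : ((1 : ℕ) : ZMod n) ≠ 0 := natCast_ne_zero_of_lt one_pos (by omega)
  intro h
  exact this (by push_cast; linear_combination -h)

lemma sub_one_ne_add_one (hn : 3 ≤ n) (j : ZMod n) : j - 1 ≠ j + 1 := by
  have : ((2 : ℕ) : ZMod n) ≠ 0 := natCast_ne_zero_of_lt two_pos (by omega)
  intro h
  exact this (by push_cast; linear_combination -h)

/-- A supporting affine functional of the polygon that exposes the vertex `v j`. -/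
def vertexSupport (v : ZMod n → Pt) (j : ZMod n) : Pt →ᵃ[ℝ] ℝ :=
  orient (v j) (v (j + 1)) + orient (v (j - 1)) (v j)

lemma vertexSupport_apply (j : ZMod n) (x : Pt) :
    vertexSupport v j x = orient (v j) (v (j + 1)) x + orient (v (j - 1)) (v j) x := rfl

lemma vertexSupport_self (j : ZMod n) : vertexSupport v j (v j) = 0 := by
  rw [vertexSupport_apply, orient_self_left, orient_self_right, add_zero]

lemma ConvexCCW.orient_nonneg (hv : ConvexCCW v) (i k : ZMod n) :
    0 ≤ orient (v i) (v (i + 1)) (v k) := by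
  rcases eq_or_ne k i with rfl | hki
  · exact (orient_self_left _ _).ge
  rcases eq_or_ne k (i + 1) with rfl | hki'
  · exact (orient_self_right _ _).ge
  exact (hv i k hki hki').le

lemma ConvexCCW.vertexSupport_pos (hv : ConvexCCW v) (hn : 3 ≤ n) {j k : ZMod n} (hkj : k ≠ j) :
    0 < vertexSupport v j (v k) := by
  have h1 := hv.orient_nonneg j k
  have h2 := hv.orient_nonneg (j - 1) k
  rw [sub_add_cancel] at h2
  rw [vertexSupport_apply]
  rcases eq_or_ne k (j + 1) with rfl | hkj'
  · have : 0 < orient (v (j - 1)) (v (j - 1 + 1)) (v (j + 1)) :=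
      hv (j - 1) (j + 1) (sub_one_ne_add_one hn j).symm
        (by rw [sub_add_cancel]; exact (self_ne_add_one hn j).symm)
    rw [sub_add_cancel] at this
    linarith
  · have : 0 < orient (v j) (v (j + 1)) (v k) := hv j k hkj hkj'
    linarith

lemma ConvexCCW.injective (hv : ConvexCCW v) (hn : 3 ≤ n) : Function.Injective v := by
  intro a b hab
  by_contra hne
  have := hv.vertexSupport_pos hn (Ne.symm hne)
  rw [← hab, vertexSupport_self] at this
  exact this.false

lemma ConvexCCW.vertexSupport_nonneg (hv : ConvexCCW v) (hn : 3 ≤ n) (j : ZMod n) {x : Pt}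
    (hx : x ∈ fullPoly v) : 0 ≤ vertexSupport v j x := by
  refine convexHull_min ?_ ((convex_Ici 0).affine_preimage (vertexSupport v j)) hx
  rintro - ⟨k, rfl⟩
  rcases eq_or_ne k j with rfl | hkj
  · exact (vertexSupport_self k).ge
  · exact (hv.vertexSupport_pos hn hkj).le

lemma ConvexCCW.mem_segment_of_orient_eq_zero (hv : ConvexCCW v) (hn : 3 ≤ n) {a b : ZMod n}
    (hab : a ≠ b) {x : Pt} (hx : x ∈ fullPoly v) (h : orient (v a) (v b) x = 0) :
    x ∈ segment ℝ (v a) (v b) := by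
  obtain ⟨t, rfl⟩ := exists_lineMap_of_orient_eq_zero ((hv.injective hn).ne hab) h
  have ha := hv.vertexSupport_nonneg hn a hx
  have hb := hv.vertexSupport_nonneg hn b hx
  rw [AffineMap.apply_lineMap, vertexSupport_self, AffineMap.lineMap_apply_module] at ha hb
  have hb_pos := hv.vertexSupport_pos hn hab.symm
  have ha_pos := hv.vertexSupport_pos hn hab
  simp only [smul_eq_mul, mul_zero, zero_add, add_zero] at ha hb
  rw [segment_eq_image_lineMap]
  exact ⟨t, ⟨nonneg_of_mul_nonneg_left ha hb_pos, by nlinarith⟩, rfl⟩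

variable [NeZero n]

lemma ConvexCCW.mem_fullPoly_of_forall_orient_pos (hv : ConvexCCW v) (hn : 3 ≤ n) {P : Pt}
    (hP : ∀ i, 0 < orient (v i) (v (i + 1)) P) : P ∈ fullPoly v := by
  by_contra hPout
  obtain ⟨φ, u, hφ, huP⟩ := geometric_hahn_banach_closed_point (convex_convexHull ℝ _)
    ((finite_range v).isCompact_convexHull (𝕜 := ℝ)).isClosed hPout
  obtain ⟨k, -, hk⟩ :=
    Finset.exists_max_image Finset.univ (fun k => φ (v k)) Finset.univ_nonempty
  -- `P` lies in the cone at `v k` spanned by the two edges at `v k`, along which `φ` decreases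
  have hc : 0 < cross (v (k + 1) - v k) (v (k - 1) - v k) :=
    hv k (k - 1) (by simpa using self_ne_add_one hn (k - 1))
      (sub_one_ne_add_one hn k)
  have hα : 0 < cross (P - v k) (v (k - 1) - v k) := by
    have := hP (k - 1)
    rw [sub_add_cancel, orient_apply] at this
    convert this using 1
    simp only [cross_apply, PiLp.sub_apply]
    ring
  have hβ : 0 < cross (v (k + 1) - v k) (P - v k) := hP k
  have hdp : φ (v (k + 1) - v k) ≤ 0 := by
    rw [map_sub]; linarith [hk (k + 1) (Finset.mem_univ _)]
  have hdm : φ (v (k - 1) - v k) ≤ 0 := by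
    rw [map_sub]; linarith [hk (k - 1) (Finset.mem_univ _)]
  have hPk : φ (P - v k) ≤ 0 := by
    rw [← cross_smul_add_smul hc.ne' (P - v k), map_add, map_smul, map_smul, smul_eq_mul,
      smul_eq_mul]
    exact add_nonpos (mul_nonpos_of_nonneg_of_nonpos (div_pos hα hc).le hdp)
      (mul_nonpos_of_nonneg_of_nonpos (div_pos hβ hc).le hdm)
  have := hφ (v k) (subset_convexHull ℝ _ (mem_range_self k))
  rw [map_sub] at hPk
  linarith

lemma ConvexCCW.mem_interior_of_forall_orient_pos (hv : ConvexCCW v) (hn : 3 ≤ n) {P : Pt}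
    (hP : ∀ i, 0 < orient (v i) (v (i + 1)) P) : P ∈ interior (fullPoly v) := by
  have hopen : IsOpen (⋂ i, {P : Pt | 0 < orient (v i) (v (i + 1)) P}) :=
    isOpen_iInter_of_finite fun i =>
      isOpen_lt continuous_const (orient _ _).continuous_of_finiteDimensional
  refine interior_maximal (fun x hx => ?_) hopen (mem_iInter.2 hP)
  exact hv.mem_fullPoly_of_forall_orient_pos hn (mem_iInter.1 hx)

end Polygon

section Chords

variable {n : ℕ} {v : ZMod n → Pt} {D : Set (Sym2 (ZMod n))} {e f g : Sym2 (ZMod n)}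

def IsDissection (v : ZMod n → Pt) (D : Set (Sym2 (ZMod n))) : Prop :=
  (∀ e ∈ D, ¬ e.IsDiag ∧ ¬ IsPolyEdge e) ∧ NonCrossing v D

lemma IsNCMatching.isDissection_fullDiags {M : Set (Sym2 (ZMod n))} (hM : IsNCMatching v M) :
    IsDissection v (fullDiags M) :=
  ⟨fun e he => ⟨hM.1.1 e he.1, he.2⟩, fun e he e' he' => hM.2 e he.1 e' he'.1⟩

lemma mk_out_fst_out_snd (e : Sym2 (ZMod n)) : s(e.out.1, e.out.2) = e := e.out_eq

/-- Oriented by the arbitrary endpoint order of `Quot.out`; only the line matters. -/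
def chordSide (v : ZMod n → Pt) (e : Sym2 (ZMod n)) : Pt →ᵃ[ℝ] ℝ :=
  orient (v e.out.1) (v e.out.2)

def chordMid (v : ZMod n → Pt) (e : Sym2 (ZMod n)) : Pt :=
  midpoint ℝ (v e.out.1) (v e.out.2)

def sideSign (v : ZMod n → Pt) (g e : Sym2 (ZMod n)) : ℝ :=
  Real.sign (chordSide v g (chordMid v e))

lemma pairSeg_eq_segment (e : Sym2 (ZMod n)) :
    pairSeg v e = segment ℝ (v e.out.1) (v e.out.2) := by
  conv_lhs => rw [← mk_out_fst_out_snd e]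
  rfl

lemma chordMid_mem_pairSeg (e : Sym2 (ZMod n)) : chordMid v e ∈ pairSeg v e := by
  rw [pairSeg_eq_segment]
  exact midpoint_mem_segment _ _

lemma pairSeg_subset_fullPoly (e : Sym2 (ZMod n)) : pairSeg v e ⊆ fullPoly v := by
  rw [pairSeg_eq_segment]
  exact segment_subset_convexHull (mem_range_self _) (mem_range_self _)

lemma chordSide_eq_zero_of_mem {x : Pt} (hx : x ∈ pairSeg v e) : chordSide v e x = 0 := by
  rw [pairSeg_eq_segment, segment_eq_image_lineMap] at hx
  obtain ⟨t, -, rfl⟩ := hx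
  rw [chordSide, AffineMap.apply_lineMap, orient_self_left, orient_self_right,
    AffineMap.lineMap_same_apply]

lemma IsDissection.out_ne (hD : IsDissection v D) (he : e ∈ D) : e.out.1 ≠ e.out.2 := by
  intro h
  apply (hD.1 e he).1
  rw [← mk_out_fst_out_snd e, h]
  exact Sym2.mk_isDiag_iff.2 rfl

lemma IsDissection.mem_pairSeg_of_chordSide_eq_zero (hD : IsDissection v D) (hv : ConvexCCW v)
    (hn : 3 ≤ n) (he : e ∈ D) {x : Pt} (hx : x ∈ fullPoly v) (h : chordSide v e x = 0) :
    x ∈ pairSeg v e := by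
  rw [pairSeg_eq_segment]
  exact hv.mem_segment_of_orient_eq_zero hn (hD.out_ne he) hx h

lemma IsDissection.chordSide_ne_zero (hD : IsDissection v D) (hv : ConvexCCW v) (hn : 3 ≤ n)
    (he : e ∈ D) (hg : g ∈ D) (hge : g ≠ e) {x : Pt} (hx : x ∈ pairSeg v e) :
    chordSide v g x ≠ 0 := fun h =>
  (hD.2 e he g hg hge.symm).ne_of_mem hx
    (hD.mem_pairSeg_of_chordSide_eq_zero hv hn hg (pairSeg_subset_fullPoly e hx) h) rfl

lemma IsDissection.sideSign_eq_sign (hD : IsDissection v D) (hv : ConvexCCW v) (hn : 3 ≤ n)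
    (he : e ∈ D) (hg : g ∈ D) (hge : g ≠ e) {x : Pt} (hx : x ∈ pairSeg v e) :
    sideSign v g e = Real.sign (chordSide v g x) := by
  have hconn : IsPreconnected (pairSeg v e) := by
    rw [pairSeg_eq_segment]
    exact (convex_segment _ _).isPreconnected
  exact hconn.sign_eq (chordSide v g).continuous_of_finiteDimensional.continuousOn
    (fun z hz => hD.chordSide_ne_zero hv hn he hg hge hz) (chordMid_mem_pairSeg e) hx

lemma IsDissection.sideSign_eq_or (hD : IsDissection v D) (hv : ConvexCCW v) (hn : 3 ≤ n)
    (he : e ∈ D) (hg : g ∈ D) (hge : g ≠ e) : sideSign v g e = -1 ∨ sideSign v g e = 1 :=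
  Real.sign_apply_eq_of_ne_zero _ (hD.chordSide_ne_zero hv hn he hg hge (chordMid_mem_pairSeg e))

lemma IsDissection.chordMid_mem_interior [NeZero n] (hD : IsDissection v D) (hv : ConvexCCW v)
    (hn : 3 ≤ n) (he : e ∈ D) : chordMid v e ∈ interior (fullPoly v) := by
  refine hv.mem_interior_of_forall_orient_pos hn fun i => ?_
  have ha := hv.orient_nonneg i e.out.1
  have hb := hv.orient_nonneg i e.out.2
  have hpos : 0 < orient (v i) (v (i + 1)) (v e.out.1) ∨
      0 < orient (v i) (v (i + 1)) (v e.out.2) := by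
    by_cases h1 : e.out.1 = i ∨ e.out.1 = i + 1
    · by_cases h2 : e.out.2 = i ∨ e.out.2 = i + 1
      · refine absurd ⟨i, ?_⟩ (hD.1 e he).2
        have hne := hD.out_ne he
        rw [← mk_out_fst_out_snd e]
        rcases h1 with h1 | h1 <;> rcases h2 with h2 | h2 <;> rw [h1, h2] at hne ⊢
        all_goals first | exact absurd rfl hne | rfl | exact Sym2.eq_swap
      · push Not at h2
        exact Or.inr (hv i _ h2.1 h2.2)
    · push Not at h1
      exact Or.inl (hv i _ h1.1 h1.2)
  rw [chordMid, AffineMap.map_midpoint, midpoint_eq_smul_add, smul_eq_mul]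
  exact mul_pos (by norm_num) (by rcases hpos with h | h <;> linarith)

lemma IsDissection.isOpenMap_smul_chordSide (hD : IsDissection v D) (hv : ConvexCCW v)
    (hn : 3 ≤ n) (he : e ∈ D) {c : ℝ} (hc : c ≠ 0) : IsOpenMap (c • chordSide v e) :=
  isOpenMap_smul_orient ((hv.injective hn).ne (hD.out_ne he)) hc

lemma IsDissection.sideSign_eq_of_sideSign_ne (hD : IsDissection v D) (hv : ConvexCCW v)
    (hn : 3 ≤ n) (he : e ∈ D) (hf : f ∈ D) (hef : e ≠ f)
    (h : sideSign v f e ≠ sideSign v f g) : sideSign v e f = sideSign v e g := by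
  have hme := chordMid_mem_pairSeg (v := v) e
  -- the segment joining the midpoints of `e` and `g` crosses `f`
  obtain ⟨z, hz, hz0⟩ : ∃ z ∈ segment ℝ (chordMid v e) (chordMid v g), chordSide v f z = 0 := by
    by_contra! H
    exact h ((convex_segment _ _).isPreconnected.sign_eq
      (chordSide v f).continuous_of_finiteDimensional.continuousOn H
      (left_mem_segment ℝ _ _) (right_mem_segment ℝ _ _))
  have hzf : z ∈ pairSeg v f := hD.mem_pairSeg_of_chordSide_eq_zero hv hn hf
    ((convex_convexHull ℝ _).segment_subset (pairSeg_subset_fullPoly e hme)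
      (pairSeg_subset_fullPoly g (chordMid_mem_pairSeg g)) hz) hz0
  rw [segment_eq_image_lineMap] at hz
  obtain ⟨t, ⟨ht0, -⟩, rfl⟩ := hz
  have ht : 0 < t := by
    refine ht0.lt_of_ne ?_
    rintro rfl
    rw [AffineMap.lineMap_apply_zero] at hz0
    exact hD.chordSide_ne_zero hv hn he hf hef.symm hme hz0
  rw [hD.sideSign_eq_sign hv hn hf he hef hzf, AffineMap.apply_lineMap,
    chordSide_eq_zero_of_mem hme, AffineMap.lineMap_apply_module, smul_zero, zero_add,
    smul_eq_mul, Real.sign_mul_of_pos ht, sideSign]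

def separators (v : ZMod n → Pt) (D : Set (Sym2 (ZMod n))) (e f : Sym2 (ZMod n)) :
    Set (Sym2 (ZMod n)) :=
  {g ∈ D | g ≠ e ∧ g ≠ f ∧ sideSign v g e ≠ sideSign v g f}

lemma separators_comm : separators v D e f = separators v D f e := by
  ext g
  simp only [separators, mem_ofPred_eq]
  tauto

lemma separators_ssubset (hD : IsDissection v D) (hv : ConvexCCW v) (hn : 3 ≤ n)
    (hg : g ∈ separators v D e f) :
    separators v D e g ⊂ separators v D e f := by
  obtain ⟨hgD, hge, hgf, hg⟩ := hg
  refine ssubset_of_subset_not_subset (fun h ⟨hhD, hhe, hhg, hh⟩ => ?_)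
    (fun hsub => (hsub ⟨hgD, hge, hgf, hg⟩).2.2.1 rfl)
  have hhf : h ≠ f := by
    rintro rfl
    exact hg (hD.sideSign_eq_of_sideSign_ne hv hn hgD hhD hhg.symm (Ne.symm hh)).symm
  have hgh : sideSign v g h = sideSign v g e :=
    hD.sideSign_eq_of_sideSign_ne hv hn hgD hhD hhg.symm (Ne.symm hh)
  have hhg' : sideSign v h g = sideSign v h f :=
    hD.sideSign_eq_of_sideSign_ne hv hn hhD hgD hhg (hgh ▸ hg)
  exact ⟨hhD, hhe, hhf, hhg' ▸ hh⟩

end Chords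

section Cells

variable {n : ℕ} {v : ZMod n → Pt} {D : Set (Sym2 (ZMod n))} {σ τ : Sym2 (ZMod n) → ℝ}
  {e : Sym2 (ZMod n)}

def IsSignVec (D : Set (Sym2 (ZMod n))) (σ : Sym2 (ZMod n) → ℝ) : Prop :=
  ∀ g ∈ D, σ g = -1 ∨ σ g = 1

def cell (v : ZMod n → Pt) (D : Set (Sym2 (ZMod n))) (σ : Sym2 (ZMod n) → ℝ) : Set Pt :=
  interior (fullPoly v) ∩ ⋂ g ∈ D, (σ g • chordSide v g) ⁻¹' Ioi 0

def closedCell (v : ZMod n → Pt) (D : Set (Sym2 (ZMod n))) (σ : Sym2 (ZMod n) → ℝ) : Set Pt :=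
  fullPoly v ∩ ⋂ g ∈ D, (σ g • chordSide v g) ⁻¹' Ici 0

def cellBoundary (v : ZMod n → Pt) (D : Set (Sym2 (ZMod n))) (σ : Sym2 (ZMod n) → ℝ) :
    Set (Sym2 (ZMod n)) :=
  {e ∈ D | ∀ g ∈ D, g ≠ e → σ g = sideSign v g e}

def signVec (v : ZMod n → Pt) (x : Pt) (g : Sym2 (ZMod n)) : ℝ := Real.sign (chordSide v g x)

/-- The sign vector of the cell touching the chord `e` from the side `s`. -/
def sideSigns (v : ZMod n → Pt) (e : Sym2 (ZMod n)) (s : ℝ) : Sym2 (ZMod n) → ℝ :=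
  Function.update (fun g => sideSign v g e) e s

lemma mem_cell {x : Pt} : x ∈ cell v D σ ↔
    x ∈ interior (fullPoly v) ∧ ∀ g ∈ D, 0 < σ g * chordSide v g x := by
  simp [cell]

lemma mem_closedCell {x : Pt} : x ∈ closedCell v D σ ↔
    x ∈ fullPoly v ∧ ∀ g ∈ D, 0 ≤ σ g * chordSide v g x := by
  simp [closedCell]

lemma closedCell_congr (h : EqOn σ τ D) : closedCell v D σ = closedCell v D τ := by
  ext x
  simp +contextual only [mem_closedCell, h _]

lemma cellBoundary_congr (h : EqOn σ τ D) : cellBoundary v D σ = cellBoundary v D τ := by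
  ext e
  simp +contextual only [cellBoundary, mem_ofPred_eq, h _]

lemma convex_cell : Convex ℝ (cell v D σ) :=
  (convex_convexHull ℝ _).interior.inter <|
    convex_iInter₂ fun _ _ => (convex_Ioi 0).affine_preimage _

lemma convex_closedCell : Convex ℝ (closedCell v D σ) :=
  (convex_convexHull ℝ _).inter <| convex_iInter₂ fun _ _ => (convex_Ici 0).affine_preimage _

lemma cell_subset_regionSpace : cell v D σ ⊆ regionSpace v (fullPoly v) D := by
  intro x hx
  refine ⟨(mem_cell.1 hx).1, fun hmem => ?_⟩
  obtain ⟨g, hg, hxg⟩ := mem_iUnion₂.1 hmem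
  have := (mem_cell.1 hx).2 g hg
  rw [chordSide_eq_zero_of_mem hxg, mul_zero] at this
  exact this.false

lemma regionSpace_eq (hD : IsDissection v D) (hv : ConvexCCW v) (hn : 3 ≤ n) :
    regionSpace v (fullPoly v) D =
      {x | x ∈ interior (fullPoly v) ∧ ∀ g ∈ D, chordSide v g x ≠ 0} := by
  ext x
  refine ⟨fun ⟨hx, hxD⟩ => ⟨hx, fun g hg h0 => hxD (mem_biUnion hg ?_)⟩,
    fun ⟨hx, hxD⟩ => ⟨hx, fun hmem => ?_⟩⟩
  · exact hD.mem_pairSeg_of_chordSide_eq_zero hv hn hg (interior_subset hx) h0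
  · obtain ⟨g, hg, hxg⟩ := mem_iUnion₂.1 hmem
    exact hxD g hg (chordSide_eq_zero_of_mem hxg)

lemma mem_cell_signVec (hD : IsDissection v D) (hv : ConvexCCW v) (hn : 3 ≤ n) {x : Pt}
    (hx : x ∈ regionSpace v (fullPoly v) D) : x ∈ cell v D (signVec v x) := by
  rw [regionSpace_eq hD hv hn] at hx
  exact mem_cell.2 ⟨hx.1, fun g hg => Real.sign_mul_pos_of_ne_zero _ (hx.2 g hg)⟩

lemma isSignVec_signVec (hD : IsDissection v D) (hv : ConvexCCW v) (hn : 3 ≤ n) {x : Pt}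
    (hx : x ∈ regionSpace v (fullPoly v) D) : IsSignVec D (signVec v x) := by
  rw [regionSpace_eq hD hv hn] at hx
  exact fun g hg => Real.sign_apply_eq_of_ne_zero _ (hx.2 g hg)

lemma isSignVec_sideSigns (hD : IsDissection v D) (hv : ConvexCCW v) (hn : 3 ≤ n) (he : e ∈ D)
    {s : ℝ} (hs : s = -1 ∨ s = 1) : IsSignVec D (sideSigns v e s) := by
  intro g hg
  rcases eq_or_ne g e with rfl | hge
  · rwa [sideSigns, Function.update_self]
  · rw [sideSigns, Function.update_of_ne hge]
    exact hD.sideSign_eq_or hv hn he hg hge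

lemma connectedComponentIn_regionSpace (hD : IsDissection v D) (hv : ConvexCCW v) (hn : 3 ≤ n)
    {x : Pt} (hx : x ∈ regionSpace v (fullPoly v) D) :
    connectedComponentIn (regionSpace v (fullPoly v) D) x = cell v D (signVec v x) := by
  refine Subset.antisymm (fun y hy => ?_) <| convex_cell.isPreconnected.subset_connectedComponentIn
    (mem_cell_signVec hD hv hn hx) cell_subset_regionSpace
  have hsub : ∀ z ∈ connectedComponentIn (regionSpace v (fullPoly v) D) x,
      z ∈ interior (fullPoly v) ∧ ∀ g ∈ D, chordSide v g z ≠ 0 := fun z hz => by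
    simpa [regionSpace_eq hD hv hn] using connectedComponentIn_subset _ _ hz
  refine mem_cell.2 ⟨(hsub y hy).1, fun g hg => ?_⟩
  have hsign : signVec v x g = Real.sign (chordSide v g y) :=
    isPreconnected_connectedComponentIn.sign_eq
      (chordSide v g).continuous_of_finiteDimensional.continuousOn
      (fun z hz => (hsub z hz).2 g hg) (mem_connectedComponentIn hx) hy
  rw [hsign]
  exact Real.sign_mul_pos_of_ne_zero _ ((hsub y hy).2 g hg)

lemma eqOn_of_mem_cellBoundary (hσ : e ∈ cellBoundary v D σ) (hτ : e ∈ cellBoundary v D τ)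
    (h : σ e = τ e) : EqOn σ τ D := fun g hg => by
  rcases eq_or_ne g e with rfl | hge
  · exact h
  · rw [hσ.2 g hg hge, hτ.2 g hg hge]

variable [NeZero n]

lemma isOpen_cell : IsOpen (cell v D σ) :=
  isOpen_interior.inter <| (toFinite D).isOpen_biInter fun g _ =>
    isOpen_Ioi.preimage (σ g • chordSide v g).continuous_of_finiteDimensional

lemma isClosed_closedCell : IsClosed (closedCell v D σ) :=
  ((finite_range v).isCompact_convexHull (𝕜 := ℝ)).isClosed.inter <| isClosed_biInter fun g _ =>
    isClosed_Ici.preimage (σ g • chordSide v g).continuous_of_finiteDimensional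

lemma interior_closedCell (hD : IsDissection v D) (hv : ConvexCCW v) (hn : 3 ≤ n)
    (hσ : IsSignVec D σ) : interior (closedCell v D σ) = cell v D σ := by
  rw [closedCell, cell, interior_inter, (toFinite D).interior_biInter]
  congr 1
  refine iInter₂_congr fun g hg => ?_
  have hσg : σ g ≠ 0 := by rcases hσ g hg with h | h <;> norm_num [h]
  rw [← (hD.isOpenMap_smul_chordSide hv hn hg hσg).preimage_interior_eq_interior_preimage
    (AffineMap.continuous_of_finiteDimensional _), interior_Ici]

lemma closure_cell (hD : IsDissection v D) (hv : ConvexCCW v) (hn : 3 ≤ n)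
    (hσ : IsSignVec D σ) (hne : (cell v D σ).Nonempty) :
    closure (cell v D σ) = closedCell v D σ := by
  rw [← interior_closedCell hD hv hn hσ] at hne ⊢
  rw [convex_closedCell.closure_interior_eq_closure_of_nonempty_interior hne,
    isClosed_closedCell.closure_eq]

lemma isRegion_iff (hD : IsDissection v D) (hv : ConvexCCW v) (hn : 3 ≤ n) {R : Set Pt} :
    IsRegion v (fullPoly v) D R ↔
      ∃ σ, IsSignVec D σ ∧ (cell v D σ).Nonempty ∧ R = closedCell v D σ := by
  constructor
  · rintro ⟨x, hx, rfl⟩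
    have hσ := isSignVec_signVec hD hv hn hx
    refine ⟨signVec v x, hσ, ⟨x, mem_cell_signVec hD hv hn hx⟩, ?_⟩
    rw [connectedComponentIn_regionSpace hD hv hn hx,
      closure_cell hD hv hn hσ ⟨x, mem_cell_signVec hD hv hn hx⟩]
  · rintro ⟨σ, hσ, ⟨x, hx⟩, rfl⟩
    have hxR := cell_subset_regionSpace hx
    refine ⟨x, hxR, ?_⟩
    have hx0 := (Set.ext_iff.1 (regionSpace_eq hD hv hn) x).1 hxR
    have heq : EqOn σ (signVec v x) D := fun g hg =>
      Real.eq_sign_of_mul_nonneg (hσ g hg) (hx0.2 g hg) ((mem_cell.1 hx).2 g hg).le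
    rw [connectedComponentIn_regionSpace hD hv hn hxR, closure_cell hD hv hn
      (isSignVec_signVec hD hv hn hxR) ⟨x, mem_cell_signVec hD hv hn hxR⟩, closedCell_congr heq]

lemma boundDiags_closedCell (hD : IsDissection v D) (hv : ConvexCCW v) (hn : 3 ≤ n)
    (hσ : IsSignVec D σ) :
    boundDiags v (fullPoly v) D (closedCell v D σ) = cellBoundary v D σ := by
  rw [boundDiags, isClosed_closedCell.frontier_eq, interior_closedCell hD hv hn hσ]
  ext e
  refine ⟨fun ⟨he, hsub⟩ => ⟨he, fun g hg hge => ?_⟩, fun ⟨he, hσe⟩ => ⟨he, fun x hx => ?_⟩⟩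
  · have hme := chordMid_mem_pairSeg (v := v) e
    exact Real.eq_sign_of_mul_nonneg (hσ g hg) (hD.chordSide_ne_zero hv hn he hg hge hme)
      ((mem_closedCell.1 (hsub hme).1).2 g hg)
  · refine ⟨mem_closedCell.2 ⟨pairSeg_subset_fullPoly e hx, fun g hg => ?_⟩, fun hcell => ?_⟩
    · rcases eq_or_ne g e with rfl | hge
      · rw [chordSide_eq_zero_of_mem hx, mul_zero]
      · rw [hσe g hg hge, hD.sideSign_eq_sign hv hn he hg hge hx]
        exact Real.sign_mul_nonneg _
    · have := (mem_cell.1 hcell).2 e he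
      rw [chordSide_eq_zero_of_mem hx, mul_zero] at this
      exact this.false

lemma cell_sideSigns_nonempty (hD : IsDissection v D) (hv : ConvexCCW v) (hn : 3 ≤ n)
    (he : e ∈ D) {s : ℝ} (hs : s = -1 ∨ s = 1) : (cell v D (sideSigns v e s)).Nonempty := by
  have hs0 : s ≠ 0 := by rcases hs with rfl | rfl <;> norm_num
  set m := chordMid v e
  -- near `m`, the cell is cut out of a neighbourhood of `m` by the line of `e` alone
  have hU : m ∈ cell v (D \ {e}) (sideSigns v e s) := by
    refine mem_cell.2 ⟨hD.chordMid_mem_interior hv hn he, fun g ⟨hg, hge⟩ => ?_⟩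
    rw [sideSigns, Function.update_of_ne hge, sideSign]
    exact Real.sign_mul_pos_of_ne_zero _
      (hD.chordSide_ne_zero hv hn he hg hge (chordMid_mem_pairSeg e))
  have hm : m ∈ closure ((s • chordSide v e) ⁻¹' Ioi 0) := by
    rw [← (hD.isOpenMap_smul_chordSide hv hn he hs0).preimage_closure_eq_closure_preimage
      (AffineMap.continuous_of_finiteDimensional _), closure_Ioi, mem_preimage,
      AffineMap.coe_smul, Pi.smul_apply, chordSide_eq_zero_of_mem (chordMid_mem_pairSeg e),
      smul_zero]
    exact mem_Ici.2 le_rfl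
  obtain ⟨x, hxU, hxe⟩ := mem_closure_iff.1 hm _ isOpen_cell hU
  refine ⟨x, mem_cell.2 ⟨(mem_cell.1 hxU).1, fun g hg => ?_⟩⟩
  rcases eq_or_ne g e with rfl | hge
  · rw [sideSigns, Function.update_self]
    exact hxe
  · exact (mem_cell.1 hxU).2 g ⟨hg, hge⟩

end Cells

section Cascades

open SimpleGraph

variable {n : ℕ} [NeZero n] {v : ZMod n → Pt} {D : Set (Sym2 (ZMod n))}
  {σ : Sym2 (ZMod n) → ℝ} {e f g : Sym2 (ZMod n)}

lemma cascadeGraph_adj_iff (hD : IsDissection v D) (hv : ConvexCCW v) (hn : 3 ≤ n) {A B : D} :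
    (cascadeGraph v (fullPoly v) D).Adj A B ↔ A ≠ B ∧
      ∃ σ, IsSignVec D σ ∧ (cell v D σ).Nonempty ∧ cellBoundary v D σ = {A.1, B.1} := by
  have hAB : A ≠ B → A.1 ≠ B.1 := Subtype.coe_injective.ne
  constructor
  · rintro ⟨hne, R, ⟨hR, hcard⟩, hA, hB⟩
    obtain ⟨σ, hσ, hcell, rfl⟩ := (isRegion_iff hD hv hn).1 hR
    rw [boundDiags_closedCell hD hv hn hσ] at hcard
    have hsub : {A.1, B.1} ⊆ cellBoundary v D σ := by
      rw [← boundDiags_closedCell hD hv hn hσ]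
      rintro _ (rfl | rfl)
      exacts [⟨A.2, hA⟩, ⟨B.2, hB⟩]
    refine ⟨hne, σ, hσ, hcell, (eq_of_subset_of_ncard_le hsub ?_ (toFinite _)).symm⟩
    rw [hcard, ncard_pair (hAB hne)]
  · rintro ⟨hne, σ, hσ, hcell, hbd⟩
    rw [← boundDiags_closedCell hD hv hn hσ] at hbd
    have hA : A.1 ∈ boundDiags v (fullPoly v) D (closedCell v D σ) := hbd ▸ Or.inl rfl
    have hB : B.1 ∈ boundDiags v (fullPoly v) D (closedCell v D σ) := hbd ▸ Or.inr rfl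
    exact ⟨hne, closedCell v D σ, ⟨(isRegion_iff hD hv hn).2 ⟨σ, hσ, hcell, rfl⟩,
      by rw [hbd, ncard_pair (hAB hne)]⟩, hA.2, hB.2⟩

lemma sideSign_eq_of_adj (hD : IsDissection v D) (hv : ConvexCCW v) (hn : 3 ≤ n) {A B : D}
    (hAB : (cascadeGraph v (fullPoly v) D).Adj A B) (hg : g ∈ D) (hgA : g ≠ A.1)
    (hgB : g ≠ B.1) : sideSign v g A.1 = sideSign v g B.1 := by
  obtain ⟨-, σ, -, -, hbd⟩ := (cascadeGraph_adj_iff hD hv hn).1 hAB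
  have hA : A.1 ∈ cellBoundary v D σ := hbd ▸ Or.inl rfl
  have hB : B.1 ∈ cellBoundary v D σ := hbd ▸ Or.inr rfl
  rw [← hA.2 g hg hgA, hB.2 g hg hgB]

lemma sideSign_eq_of_walk (hD : IsDissection v D) (hv : ConvexCCW v) (hn : 3 ≤ n) (X : D)
    {U Y : D} (w : (cascadeGraph v (fullPoly v) D).Walk U Y) (hX : X ∉ w.support) :
    sideSign v X.1 U.1 = sideSign v X.1 Y.1 := by
  induction w with
  | nil => rfl
  | cons hadj w ih =>
    rw [Walk.support_cons, List.mem_cons, not_or] at hX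
    have hXw : X.1 ≠ _ := Subtype.coe_injective.ne fun h => hX.2 (h ▸ w.start_mem_support)
    rw [sideSign_eq_of_adj hD hv hn hadj X.2 (Subtype.coe_injective.ne hX.1) hXw]
    exact ih hX.2

lemma not_reachable_of_mem_cellBoundary (hD : IsDissection v D) (hv : ConvexCCW v) (hn : 3 ≤ n)
    {X Y : D} (hX : X.1 ∈ cellBoundary v D σ) (hY : Y.1 ∈ cellBoundary v D σ)
    (hz : e ∈ cellBoundary v D σ) (hXY : X.1 ≠ Y.1) (hXz : X.1 ≠ e) (hYz : Y.1 ≠ e) :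
    ¬ (cascadeGraph v (fullPoly v) D).Reachable X Y := by
  rintro ⟨w⟩
  have hp := w.bypass_isPath
  cases hw : w.bypass with
  | nil => exact hXY rfl
  | @cons _ U _ hadj q =>
    rw [hw, Walk.cons_isPath_iff] at hp
    obtain ⟨-, τ, -, -, hbd⟩ := (cascadeGraph_adj_iff hD hv hn).1 hadj
    have hXτ : X.1 ∈ cellBoundary v D τ := hbd ▸ Or.inl rfl
    have hUτ : U.1 ∈ cellBoundary v D τ := hbd ▸ Or.inr rfl
    have hXU : X.1 ≠ U.1 := Subtype.coe_injective.ne hadj.ne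
    -- a path leaves `X` on the side away from the cell of `σ` (else its first 2-bounded cell
    -- would be that cell), and it never crosses `X` again
    have hside : sideSign v X.1 U.1 ≠ σ X.1 := by
      intro h
      rw [cellBoundary_congr (eqOn_of_mem_cellBoundary hX hXτ (h ▸ hUτ.2 X.1 X.2 hXU).symm),
        hbd] at hY hz
      rcases hY with hY | hY <;> rcases hz with hz | hz
      exacts [hXY hY.symm, hXY hY.symm, hXz hz.symm, hYz (hY.trans hz.symm)]
    rw [sideSign_eq_of_walk hD hv hn X q hp.2, ← hY.2 X.1 X.2 hXY] at hside
    exact hside rfl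

lemma exists_not_reachable_separators_eq_empty (hD : IsDissection v D) (hv : ConvexCCW v)
    (hn : 3 ≤ n) {E F : D} (h : ¬ (cascadeGraph v (fullPoly v) D).Reachable E F) :
    ∃ E' F' : D, ¬ (cascadeGraph v (fullPoly v) D).Reachable E' F' ∧
      separators v D E'.1 F'.1 = ∅ := by
  induction hk : (separators v D E.1 F.1).ncard using Nat.strong_induction_on
    generalizing E F with
  | _ k ih =>
  obtain h0 | ⟨g, hg⟩ := (separators v D E.1 F.1).eq_empty_or_nonempty
  · exact ⟨E, F, h, h0⟩
  by_cases hEg : (cascadeGraph v (fullPoly v) D).Reachable E ⟨g, hg.1⟩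
  · refine ih _ ?_ (fun hgF => h (hEg.trans hgF)) rfl
    rw [← hk, separators_comm, separators_comm (e := E.1)]
    exact ncard_lt_ncard (separators_ssubset hD hv hn (separators_comm ▸ hg))
  · exact ih _ (hk ▸ ncard_lt_ncard (separators_ssubset hD hv hn hg)) hEg rfl

lemma exists_not_reachable_of_separators_eq_empty (hD : IsDissection v D) (hv : ConvexCCW v)
    (hn : 3 ≤ n) {E F : D} (h : ¬ (cascadeGraph v (fullPoly v) D).Reachable E F)
    (h0 : separators v D E.1 F.1 = ∅) :
    ∃ Z : D, ¬ (cascadeGraph v (fullPoly v) D).Reachable E Z ∧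
      ¬ (cascadeGraph v (fullPoly v) D).Reachable F Z := by
  have hEF : E ≠ F := fun hEF => h (hEF ▸ Reachable.refl E)
  have hEF' : E.1 ≠ F.1 := Subtype.coe_injective.ne hEF
  -- the cell touching `E` from the side of `F` has both `E` and `F` on its boundary
  set σ := sideSigns v E.1 (sideSign v E.1 F.1)
  have hs := hD.sideSign_eq_or hv hn F.2 E.2 hEF'
  have hE : E.1 ∈ cellBoundary v D σ :=
    ⟨E.2, fun g _ hgE => Function.update_of_ne hgE _ _⟩
  have hF : F.1 ∈ cellBoundary v D σ := by
    refine ⟨F.2, fun g hg hgF => ?_⟩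
    rcases eq_or_ne g E.1 with rfl | hgE
    · exact Function.update_self _ _ _
    · refine (Function.update_of_ne hgE _ _).trans ?_
      by_contra hne
      exact h0.subset ⟨hg, hgE, hgF, hne⟩
  obtain ⟨z, hz, hzEF⟩ : ∃ z ∈ cellBoundary v D σ, z ∉ ({E.1, F.1} : Set _) := by
    by_contra! hsub
    refine h ((cascadeGraph_adj_iff hD hv hn).2 ⟨hEF, σ, isSignVec_sideSigns hD hv hn E.2 hs,
      cell_sideSigns_nonempty hD hv hn E.2 hs, subset_antisymm hsub ?_⟩).reachable
    rintro _ (rfl | rfl)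
    exacts [hE, hF]
  simp only [mem_insert_iff, mem_singleton_iff, not_or] at hzEF
  exact ⟨⟨z, hz.1⟩,
    not_reachable_of_mem_cellBoundary (Y := ⟨z, hz.1⟩) hD hv hn hE hz hF (Ne.symm hzEF.1) hEF'
      hzEF.2,
    not_reachable_of_mem_cellBoundary (Y := ⟨z, hz.1⟩) hD hv hn hF hz hE (Ne.symm hzEF.2)
      hEF'.symm hzEF.1⟩

theorem cascadeCount_ne_two (hD : IsDissection v D) (hv : ConvexCCW v) (hn : 3 ≤ n) :
    cascadeCount v (fullPoly v) D ≠ 2 := by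
  intro h2
  obtain ⟨c₁, c₂, hc, -⟩ := Nat.card_eq_two_iff.1 h2
  obtain ⟨X₁, rfl⟩ := c₁.exists_rep
  obtain ⟨X₂, rfl⟩ := c₂.exists_rep
  obtain ⟨E, F, hEF, h0⟩ := exists_not_reachable_separators_eq_empty hD hv hn
    fun h => hc (ConnectedComponent.sound h)
  obtain ⟨Z, hEZ, hFZ⟩ := exists_not_reachable_of_separators_eq_empty hD hv hn hEF h0
  exact Nat.card_ne_two_of_pairwise_ne (mt ConnectedComponent.exact hEF)
    (mt ConnectedComponent.exact hEZ) (mt ConnectedComponent.exact hFZ) h2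

end Cascades

end BNC

theorem stmt6_general (n : ℕ) [NeZero n] (hn : 4 ≤ n)
    (v : ZMod n → BNC.Pt) (hv : BNC.ConvexCCW v) :
    ∀ M : Set (Sym2 (ZMod n)), BNC.IsNCMatching v M →
      BNC.cascadeCount v (BNC.fullPoly v) (BNC.fullDiags M) ≠ 2 :=
  fun _ hM => BNC.cascadeCount_ne_two hM.isDissection_fullDiags hv (by omega)

/-- No non-crossing matching has exactly two cascades. -/
theorem stmt6 (n : ℕ) [NeZero n] (hn : 4 ≤ n) (hEven : Even n)
    (v : ZMod n → BNC.Pt) (hv : BNC.ConvexCCW v) :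
    ∀ M : Set (Sym2 (ZMod n)), BNC.IsNCMatching v M →
      BNC.cascadeCount v (BNC.fullPoly v) (BNC.fullDiags M) ≠ 2 :=
  stmt6_general n hn v hv
end
end

section
/- Let C, B₁, B₂ ∈ ℝ² with dist(C, B₁) = dist(C, B₂) = dist(B₁, B₂) = r > 0. If P and Q both lie in the closed ball of radius r centered at C and both lie on the closed side of the line through B₁ and B₂ not containing C, then dist(P, Q) ≤ r. -/
noncomputable section

/-! Every point `X` of the disc on the far side of `B₁B₂` lies within `r / 2` of the midpoint `M`
of `B₁B₂`: being on the far side means `⟪X - M, C - M⟫ ≤ 0`, so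
`|XC|² ≥ |XM|² + |CM|² = |XM|² + 3r²/4`, while `|XC|² ≤ r²`. Two points of the disc of radius
`r / 2` about `M` are at distance at most `r`. -/

section

open RealInnerProductSpace

variable {F : Type*} [NormedAddCommGroup F] [InnerProductSpace ℝ F]

theorem dist_midpoint_le_of_inner_nonpos {C B₁ B₂ X : F} {r : ℝ}
    (h1 : dist C B₁ = r) (h2 : dist C B₂ = r) (h3 : dist B₁ B₂ = r) (hX : dist X C ≤ r)
    (hside : ⟪X - midpoint ℝ B₁ B₂, C - midpoint ℝ B₁ B₂⟫ ≤ 0) :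
    dist X (midpoint ℝ B₁ B₂) ≤ r / 2 := by
  set M := midpoint ℝ B₁ B₂
  have hmedian : dist C M ^ 2 = 3 / 4 * r ^ 2 := by
    have := EuclideanGeometry.dist_sq_add_dist_sq_eq_two_mul_dist_midpoint_sq_add_half_dist_sq
      C B₁ B₂
    rw [h1, h2, h3] at this
    linarith
  have hobtuse : dist X M ^ 2 + dist C M ^ 2 ≤ dist X C ^ 2 := by
    have := norm_sub_sq_real (X - M) (C - M)
    rw [sub_sub_sub_cancel_right] at this
    simp only [dist_eq_norm]
    linarith
  have hr : 0 ≤ r := h3 ▸ dist_nonneg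
  have hsq : dist X M ^ 2 ≤ (r / 2) ^ 2 := by nlinarith [dist_nonneg (x := X) (y := C)]
  exact (pow_le_pow_iff_left₀ dist_nonneg (by positivity) two_ne_zero).mp hsq

namespace BNC

theorem cross_mul_cross_add_inner_mul_inner (u a b : Pt) :
    cross u a * cross u b + ⟪u, a⟫ * ⟪u, b⟫ = ‖u‖ ^ 2 * ⟪a, b⟫ := by
  simp only [cross, EuclideanSpace.norm_sq_eq, PiLp.inner_apply, Fin.sum_univ_two,
    RCLike.inner_apply, conj_trivial, Real.norm_eq_abs, sq_abs]
  ring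

theorem cross_sub_left_eq_cross_sub_midpoint (B₁ B₂ X : Pt) :
    cross (B₂ - B₁) (X - B₁) = cross (B₂ - B₁) (X - midpoint ℝ B₁ B₂) := by
  simp only [cross, midpoint_eq_smul_add, PiLp.sub_apply, PiLp.smul_apply, PiLp.add_apply,
    smul_eq_mul, invOf_eq_inv]
  ring

theorem inner_sub_midpoint_nonpos_of_cross_mul_cross_nonpos {C B₁ B₂ X : Pt} (hB : B₁ ≠ B₂)
    (hC : dist C B₁ = dist C B₂)
    (hside : cross (B₂ - B₁) (C - B₁) * cross (B₂ - B₁) (X - B₁) ≤ 0) :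
    ⟪X - midpoint ℝ B₁ B₂, C - midpoint ℝ B₁ B₂⟫ ≤ 0 := by
  set M := midpoint ℝ B₁ B₂
  have hperp : ⟪B₂ - B₁, C - M⟫ = 0 := by
    rw [real_inner_comm]
    exact EuclideanGeometry.inner_vsub_vsub_of_dist_eq_of_dist_eq
      (dist_left_midpoint_eq_dist_right_midpoint B₁ B₂) (by rwa [dist_comm B₁, dist_comm B₂])
  have hpos : 0 < ‖B₂ - B₁‖ ^ 2 := by
    have := sub_ne_zero.mpr hB.symm
    positivity
  have hlagrange := cross_mul_cross_add_inner_mul_inner (B₂ - B₁) (C - M) (X - M)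
  rw [← cross_sub_left_eq_cross_sub_midpoint, ← cross_sub_left_eq_cross_sub_midpoint, hperp,
    zero_mul, add_zero] at hlagrange
  rw [real_inner_comm]
  nlinarith

end BNC

end

/-- Two points of the disk of radius `r` centered at the apex `C` of an
equilateral triangle `C B₁ B₂` of side `r`, lying on the closed side of the
line `B₁B₂` not containing `C`, are at distance at most `r`. -/
theorem stmt14 (C B₁ B₂ P Q : BNC.Pt) (r : ℝ) (hr : 0 < r)
    (h1 : dist C B₁ = r) (h2 : dist C B₂ = r) (h3 : dist B₁ B₂ = r)
    (hP : P ∈ Metric.closedBall C r) (hQ : Q ∈ Metric.closedBall C r)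
    (hPside : BNC.cross (B₂ - B₁) (C - B₁) * BNC.cross (B₂ - B₁) (P - B₁) ≤ 0)
    (hQside : BNC.cross (B₂ - B₁) (C - B₁) * BNC.cross (B₂ - B₁) (Q - B₁) ≤ 0) :
    dist P Q ≤ r := by
  have hB : B₁ ≠ B₂ := dist_pos.mp (h3 ▸ hr)
  have hnear : ∀ X : BNC.Pt, X ∈ Metric.closedBall C r →
      BNC.cross (B₂ - B₁) (C - B₁) * BNC.cross (B₂ - B₁) (X - B₁) ≤ 0 →
      dist X (midpoint ℝ B₁ B₂) ≤ r / 2 := fun X hX hside =>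
    dist_midpoint_le_of_inner_nonpos h1 h2 h3 hX
      (BNC.inner_sub_midpoint_nonpos_of_cross_mul_cross_nonpos hB (h1.trans h2.symm) hside)
  calc dist P Q ≤ dist P (midpoint ℝ B₁ B₂) + dist Q (midpoint ℝ B₁ B₂) :=
        dist_triangle_right _ _ _
    _ ≤ r / 2 + r / 2 := add_le_add (hnear P hP hPside) (hnear Q hQ hQside)
    _ = r := add_halves r
end
end

section
/- Let u, w ∈ ℝ² be distinct with r = dist(u, w), and let the 'right side' be one of the two closed half-planes of the line through u and w. If P ≠ w lies in the set Π⁺ = {points on the right side with ∠ u P w ≥ π/3 and dist(P, u) ≥ r}, then π/3 ≤ ∠ u w P ≤ 2π/3 (unsigned angles). -/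
noncomputable section

/-! In the triangle `u w P` the side `uP` opposite `w` is at least the side `uw` opposite `P`, so
`∠ u w P ≥ ∠ u P w ≥ π/3`; the angle sum then leaves at most `2π/3` for `∠ u w P`. -/

open EuclideanGeometry Real

section

variable {V Q : Type*} [NormedAddCommGroup V] [InnerProductSpace ℝ V] [MetricSpace Q]
  [NormedAddTorsor V Q]

/-- A straight angle at `c` would make `ab` longer than `ac`. -/
lemma not_collinear_of_dist_le_of_angle_pos {a b c : Q} (hab : a ≠ b) (hcb : c ≠ b)
    (hpos : 0 < ∠ a c b) (hdist : dist a b ≤ dist a c) : ¬Collinear ℝ ({a, b, c} : Set Q) := by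
  have hca : c ≠ a := by
    rintro rfl
    exact hab (dist_le_zero.1 (by simpa using hdist))
  rw [Set.pair_comm b c, collinear_iff_eq_or_eq_or_angle_eq_zero_or_angle_eq_pi]
  rintro (h | h | h | h)
  · exact hca h.symm
  · exact hcb h.symm
  · exact hpos.ne' h
  · have := dist_eq_add_dist_of_angle_eq_pi h
    linarith [dist_pos.2 hcb.symm]

lemma angle_mem_Icc_of_dist_le_of_pi_div_three_le_angle {a b c : Q} (hab : a ≠ b) (hcb : c ≠ b)
    (hang : π / 3 ≤ ∠ a c b) (hdist : dist a b ≤ dist a c) :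
    π / 3 ≤ ∠ a b c ∧ ∠ a b c ≤ 2 * π / 3 := by
  have hnc := not_collinear_of_dist_le_of_angle_pos hab hcb
    (lt_of_lt_of_le (by positivity) hang) hdist
  have hle : ∠ a c b ≤ ∠ a b c := (angle_le_iff_dist_le hnc).2 hdist
  have hsum := angle_add_angle_add_angle_eq_pi c hab.symm
  constructor <;> linarith [angle_nonneg c a b, angle_comm b c a]

end

theorem stmt15_general (u w P : BNC.Pt) (huw : u ≠ w) (r : ℝ) (hr : r = dist u w)
    (hPw : P ≠ w)
    (hang : Real.pi / 3 ≤ EuclideanGeometry.angle u P w)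
    (hdist : r ≤ dist P u) :
    Real.pi / 3 ≤ EuclideanGeometry.angle u w P ∧
      EuclideanGeometry.angle u w P ≤ 2 * Real.pi / 3 := by
  subst hr
  exact angle_mem_Icc_of_dist_le_of_pi_div_three_le_angle huw hPw hang (dist_comm P u ▸ hdist)

/-- If `P ≠ w` lies in the region `Π⁺` attached to the segment `uw` (on a
chosen closed side of the line `uw`), then `π/3 ≤ ∠ u w P ≤ 2π/3`. -/
theorem stmt15 (u w P : BNC.Pt) (huw : u ≠ w) (r : ℝ) (hr : r = dist u w)
    (s : ℝ) (hs : s = 1 ∨ s = -1)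
    (hside : 0 ≤ s * BNC.cross (w - u) (P - u))
    (hPw : P ≠ w)
    (hang : Real.pi / 3 ≤ EuclideanGeometry.angle u P w)
    (hdist : r ≤ dist P u) :
    Real.pi / 3 ≤ EuclideanGeometry.angle u w P ∧
      EuclideanGeometry.angle u w P ≤ 2 * Real.pi / 3 :=
  stmt15_general u w P huw r hr hPw hang hdist
end
end
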